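/- Let ν be a non-Archimedean absolute value on ℝ extending the 2-adic absolute value on ℚ. Define Xⱼ = {x ∈ S² : ν(xⱼ) > ν(x_k) for all k ≠ j} and Yⱼ = {x ∈ S² : ν(xⱼ) ≥ ν(x_k) for all k ≠ j}. Then for any x ∈ Xⱼ and y ∈ Yⱼ, x·y ≠ 0. -/

import Mathlib

/-!
Expand `x · y = ∑ₖ xₖ yₖ`. Since `ν(xⱼ) > ν(xₖ)` and `ν(yⱼ) ≥ ν(yₖ)` for `k ≠ j`, with `yⱼ ≠ 0`,
the term `xⱼ yⱼ` has strictly larger absolute value than every other term. In a non-Archimedean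
absolute value a sum with a unique dominant term has the absolute value of that term, so it is
nonzero.
-/

open Matrix

def AbsoluteValue.ofIsNonarchimedean {R : Type*} [Semiring R] (ν : R → ℝ)
    (hnn : ∀ a, 0 ≤ ν a) (hmul : ∀ a b, ν (a * b) = ν a * ν b)
    (hadd : IsNonarchimedean ν) (hzero : ∀ a, ν a = 0 ↔ a = 0) : AbsoluteValue R ℝ where
  toFun := ν
  map_mul' := hmul
  nonneg' := hnn
  eq_zero' := hzero
  add_le' _ _ := hadd.add_le hnn

namespace AbsoluteValue

variable {R ι : Type*} [Ring R] (v : AbsoluteValue R ℝ)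

lemma apply_ne_zero_of_forall_apply_le {x : ι → R} {j : ι} (hx : ∀ k ≠ j, v (x k) ≤ v (x j))
    (hx0 : x ≠ 0) : x j ≠ 0 := by
  intro hxj
  refine hx0 (funext fun k => ?_)
  by_cases hk : k = j
  · rw [hk, hxj, Pi.zero_apply]
  · exact v.eq_zero.mp (le_antisymm (by simpa [hxj] using hx k hk) (v.nonneg _))

variable [Fintype ι] [NoZeroDivisors R]

theorem dotProduct_ne_zero_of_dominant (hv : IsNonarchimedean v) {x y : ι → R} {j : ι}
    (hx : ∀ k ≠ j, v (x k) < v (x j)) (hy : ∀ k ≠ j, v (y k) ≤ v (y j))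
    (hx0 : x ≠ 0) (hy0 : y ≠ 0) : x ⬝ᵥ y ≠ 0 := by
  have hxj : x j ≠ 0 := v.apply_ne_zero_of_forall_apply_le (fun k hk => (hx k hk).le) hx0
  have hyj : y j ≠ 0 := v.apply_ne_zero_of_forall_apply_le hy hy0
  have hterm : ∀ k ∈ Finset.univ, k ≠ j → v (x k * y k) < v (x j * y j) := by
    intro k _ hk
    rw [v.map_mul, v.map_mul]
    calc v (x k) * v (y k) ≤ v (x k) * v (y j) := mul_le_mul_of_nonneg_left (hy k hk) (v.nonneg _)
      _ < v (x j) * v (y j) := mul_lt_mul_of_pos_right (hx k hk) (v.pos hyj)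
  have hsum : v (x ⬝ᵥ y) = v (x j * y j) :=
    hv.apply_sum_eq_of_lt (fun a => (v.map_neg a).symm) (Finset.mem_univ j) hterm
  rw [← v.ne_zero_iff, hsum]
  exact v.ne_zero (mul_ne_zero hxj hyj)

end AbsoluteValue

theorem stmt_16_general (ν : ℝ → ℝ)
    (hnn : ∀ a, 0 ≤ ν a)
    (hmul : ∀ a b, ν (a * b) = ν a * ν b)
    (hadd : ∀ a b, ν (a + b) ≤ max (ν a) (ν b))
    (hzero : ∀ a, ν a = 0 ↔ a = 0)
    (X Y : Fin 3 → Set (EuclideanSpace ℝ (Fin 3)))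
    (hX : ∀ j, X j = {x | ‖x‖ = 1 ∧ ∀ k, k ≠ j → ν (x j) > ν (x k)})
    (hY : ∀ j, Y j = {x | ‖x‖ = 1 ∧ ∀ k, k ≠ j → ν (x j) ≥ ν (x k)}) :
    ∀ j, ∀ x ∈ X j, ∀ y ∈ Y j, (inner ℝ x y : ℝ) ≠ 0 := by
  intro j x hx y hy
  rw [hX] at hx
  rw [hY] at hy
  have ne_zero_of_norm {z : EuclideanSpace ℝ (Fin 3)} (hz : ‖z‖ = 1) : z.ofLp ≠ 0 :=
    (WithLp.ofLp_injective 2).ne (ne_zero_of_norm_ne_zero (hz ▸ one_ne_zero))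
  rw [EuclideanSpace.inner_eq_star_dotProduct, star_trivial, dotProduct_comm]
  exact (AbsoluteValue.ofIsNonarchimedean ν hnn hmul hadd hzero).dotProduct_ne_zero_of_dominant
    hadd hx.2 hy.2 (ne_zero_of_norm hx.1) (ne_zero_of_norm hy.1)

theorem stmt_16 (ν : ℝ → ℝ)
    (hnn : ∀ a, 0 ≤ ν a)
    (hmul : ∀ a b, ν (a * b) = ν a * ν b)
    (hadd : ∀ a b, ν (a + b) ≤ max (ν a) (ν b))
    (hzero : ∀ a, ν a = 0 ↔ a = 0)
    (hext : ∀ q : ℚ, ν (q : ℝ) = (padicNorm 2 q : ℝ))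
    (X Y : Fin 3 → Set (EuclideanSpace ℝ (Fin 3)))
    (hX : ∀ j, X j = {x | ‖x‖ = 1 ∧ ∀ k, k ≠ j → ν (x j) > ν (x k)})
    (hY : ∀ j, Y j = {x | ‖x‖ = 1 ∧ ∀ k, k ≠ j → ν (x j) ≥ ν (x k)}) :
    ∀ j, ∀ x ∈ X j, ∀ y ∈ Y j, (inner ℝ x y : ℝ) ≠ 0 :=
  stmt_16_general ν hnn hmul hadd hzero X Y hX hY
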